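/- (Gaussian distribution equivalence of Markov-equivalent DAGs; forward direction of Result 3 for the Gaussian family.) Let G₁ and G₂ be DAGs on Fin T with the same skeleton and the same set of v-structures. For a DAG G, let ℳ(G) = { (1 − B)⁻¹ * D * ((1 − B)⁻¹)ᵀ : B : Matrix (Fin T) (Fin T) ℝ with B t v ≠ 0 only if v → t is an edge of G, and D a diagonal matrix with strictly positive diagonal entries } be the set of covariance matrices realizable by Gaussian linear structural equation models over G. Then ℳ(G₁) = ℳ(G₂). -/

import Mathlib

open Matrix

section GraphDefs

variable {V : Type*}

/-- `u` and `v` are adjacent: there is an edge between them in some direction. -/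
def Adj (E : V → V → Prop) (u v : V) : Prop := E u v ∨ E v u

/-- `E` is a DAG: the edge relation has no directed cycle (in particular it is
irreflexive). -/
def IsDAG (E : V → V → Prop) : Prop := ∀ v, ¬ Relation.TransGen E v v

/-- `(u, m, v)` is a v-structure: edges `u → m ← v` with `u ≠ v` and `u`, `v`
not adjacent. -/
def VStruct (E : V → V → Prop) (u m v : V) : Prop :=
  E u m ∧ E v m ∧ u ≠ v ∧ ¬ Adj E u v

end GraphDefs

/-- The set of covariance matrices realizable by Gaussian linear structural equation
models over the DAG with edge relation `E` on `Fin T`: matrices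
`(1 - B)⁻¹ * D * ((1 - B)⁻¹)ᵀ` with `B t v ≠ 0` only if `v → t` is an edge of the graph,
and `D` a diagonal matrix with strictly positive diagonal entries. -/
def covSet (T : ℕ) (E : Fin T → Fin T → Prop) : Set (Matrix (Fin T) (Fin T) ℝ) :=
  { S | ∃ (B : Matrix (Fin T) (Fin T) ℝ) (d : Fin T → ℝ),
      (∀ t v, B t v ≠ 0 → E v t) ∧ (∀ t, 0 < d t) ∧
      S = (1 - B)⁻¹ * Matrix.diagonal d * ((1 - B)⁻¹)ᵀ }

section Aux
open Relation

variable {V : Type*} {E : Fin 0 → Fin 0 → Prop}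

lemma dag_irrefl {E : V → V → Prop} (h : IsDAG E) (a : V) : ¬ E a a :=
  fun ha => h a (TransGen.single ha)

lemma dag_asymm {E : V → V → Prop} (h : IsDAG E) {a b : V} (hab : E a b) : ¬ E b a :=
  fun hba => h a ((TransGen.single hab).tail hba)

variable {T : ℕ}

open Classical in
/-- ancestors (including self) -/
noncomputable def anc (E : Fin T → Fin T → Prop) (v : Fin T) : Finset (Fin T) :=
  Finset.univ.filter (fun u => Relation.ReflTransGen E u v)

lemma mem_anc_self (E : Fin T → Fin T → Prop) (v : Fin T) : v ∈ anc E v := by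
  classical
  simp only [anc, Finset.mem_filter]
  exact ⟨Finset.mem_univ v, ReflTransGen.refl⟩

lemma anc_card_lt {E : Fin T → Fin T → Prop} (h : IsDAG E) {x y : Fin T} (hxy : E x y) :
    (anc E x).card < (anc E y).card := by
  classical
  apply Finset.card_lt_card
  constructor
  · intro u hu
    simp only [anc, Finset.mem_filter, Finset.mem_univ, true_and] at hu ⊢
    exact hu.tail hxy
  · intro hsub
    have hy : y ∈ anc E x := hsub (mem_anc_self E y)
    simp only [anc, Finset.mem_filter, Finset.mem_univ, true_and] at hy
    exact h y (TransGen.tail' hy hxy)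

lemma anc_card_le (E : Fin T → Fin T → Prop) (v : Fin T) : (anc E v).card ≤ T := by
  simpa using Finset.card_le_card (Finset.subset_univ (anc E v))

lemma anc_card_pos (E : Fin T → Fin T → Prop) (v : Fin T) : 1 ≤ (anc E v).card :=
  Finset.card_pos.mpr ⟨v, mem_anc_self E v⟩

lemma supported_nilpotent {E : Fin T → Fin T → Prop} (h : IsDAG E)
    {B : Matrix (Fin T) (Fin T) ℝ} (hB : ∀ t v, B t v ≠ 0 → E v t) :
    B ^ T = 0 := by
  have key : ∀ n t v, (B ^ n) t v ≠ 0 → (anc E v).card + n ≤ (anc E t).card := by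
    intro n
    induction n with
    | zero =>
      intro t v hne
      rw [pow_zero] at hne
      rcases eq_or_ne t v with rfl | hne'
      · simp
      · simp [Matrix.one_apply_ne hne'] at hne
    | succ n ih =>
      intro t v hne
      rw [pow_succ'] at hne
      rw [Matrix.mul_apply] at hne
      obtain ⟨w, -, hw⟩ := Finset.exists_ne_zero_of_sum_ne_zero hne
      have h1 : B t w ≠ 0 := fun hz => hw (by simp [hz])
      have h2 : (B ^ n) w v ≠ 0 := fun hz => hw (by simp [hz])
      have := anc_card_lt h (hB t w h1)
      have := ih w v h2
      omega
  ext t v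
  by_contra hne
  have := key T t v hne
  have := anc_card_le E t
  have := anc_card_pos E v
  omega

lemma isUnit_one_sub_det {E : Fin T → Fin T → Prop} (h : IsDAG E)
    {B : Matrix (Fin T) (Fin T) ℝ} (hB : ∀ t v, B t v ≠ 0 → E v t) :
    IsUnit (1 - B).det := by
  have : IsNilpotent B := ⟨T, supported_nilpotent h hB⟩
  exact (Matrix.isUnit_iff_isUnit_det _).mp this.isUnit_one_sub

/-- `S * A = 1` where `A` is the precision matrix. -/
lemma cov_mul_prec {B : Matrix (Fin T) (Fin T) ℝ} {d : Fin T → ℝ}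
    (hdet : IsUnit (1 - B).det) (hd : ∀ t, d t ≠ 0) :
    ((1 - B)⁻¹ * Matrix.diagonal d * ((1 - B)⁻¹)ᵀ) *
      ((1 - B)ᵀ * Matrix.diagonal (fun t => (d t)⁻¹) * (1 - B)) = 1 := by
  have h1 : ((1 - B)⁻¹)ᵀ * (1 - B)ᵀ = 1 := by
    rw [Matrix.transpose_nonsing_inv]
    exact Matrix.nonsing_inv_mul _ (by rwa [Matrix.det_transpose])
  have h2 : Matrix.diagonal d * Matrix.diagonal (fun t => (d t)⁻¹) = 1 := by
    rw [Matrix.diagonal_mul_diagonal]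
    have : (fun t => d t * (d t)⁻¹) = fun _ => (1:ℝ) := funext fun t => mul_inv_cancel₀ (hd t)
    rw [this, Matrix.diagonal_one]
  calc ((1 - B)⁻¹ * Matrix.diagonal d * ((1 - B)⁻¹)ᵀ) *
      ((1 - B)ᵀ * Matrix.diagonal (fun t => (d t)⁻¹) * (1 - B))
      = (1 - B)⁻¹ * (Matrix.diagonal d *
        ((((1 - B)⁻¹)ᵀ * (1 - B)ᵀ) * Matrix.diagonal (fun t => (d t)⁻¹))) * (1 - B) := by
        simp only [Matrix.mul_assoc]
    _ = (1 - B)⁻¹ * (1 - B) := by rw [h1, Matrix.one_mul, h2, Matrix.mul_one]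
    _ = 1 := Matrix.nonsing_inv_mul _ hdet

lemma cov_eq_prec_inv {B : Matrix (Fin T) (Fin T) ℝ} {d : Fin T → ℝ}
    (hdet : IsUnit (1 - B).det) (hd : ∀ t, d t ≠ 0) :
    (1 - B)⁻¹ * Matrix.diagonal d * ((1 - B)⁻¹)ᵀ =
      ((1 - B)ᵀ * Matrix.diagonal (fun t => (d t)⁻¹) * (1 - B))⁻¹ :=
  (Matrix.inv_eq_left_inv (cov_mul_prec hdet hd)).symm

/-- entrywise formula of the precision matrix -/
lemma prec_apply (B : Matrix (Fin T) (Fin T) ℝ) (d : Fin T → ℝ) (i j : Fin T) :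
    (((1 - B)ᵀ * Matrix.diagonal (fun t => (d t)⁻¹) * (1 - B)) :
      Matrix (Fin T) (Fin T) ℝ) i j =
      ∑ t, (d t)⁻¹ * ((1 - B) t i * (1 - B) t j) := by
  rw [Matrix.mul_apply]
  congr 1
  ext t
  rw [Matrix.mul_diagonal, Matrix.transpose_apply]
  ring

end Aux

section Rev
open Relation
variable {T : ℕ}

/-- reversal of the edge `u → v` -/
def revRel (E : Fin T → Fin T → Prop) (u v : Fin T) : Fin T → Fin T → Prop :=
  fun x y => (E x y ∧ ¬(x = u ∧ y = v)) ∨ (x = v ∧ y = u)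

variable {E : Fin T → Fin T → Prop} {u v : Fin T}

/-- notation for the "covered" condition -/
def Covered (E : Fin T → Fin T → Prop) (u v : Fin T) : Prop :=
  ∀ w, E w v ↔ (E w u ∨ w = u)

lemma revRel_isDAG (h : IsDAG E) (huv : E u v) (hcov : Covered E u v) :
    IsDAG (revRel E u v) := by
  set E'' : Fin T → Fin T → Prop := fun x y => E x y ∧ ¬(x = u ∧ y = v) with hE''
  have hmono : ∀ {x y}, E'' x y → E x y := fun h => h.1
  have hsub1 : ¬ TransGen E'' u v := by
    intro h'
    obtain ⟨z, hz1, hz2⟩ := TransGen.tail'_iff.mp h'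
    have hzu : z ≠ u := fun hz => hz2.2 ⟨hz, rfl⟩
    have hzv : E z v := hz2.1
    have hzEu : E z u := ((hcov z).mp hzv).resolve_right hzu
    have : ReflTransGen E u z := ReflTransGen.mono (r := E'') (p := E) (fun _ _ => hmono) _ _ hz1
    exact h u (TransGen.tail' this hzEu)
  have huvne : u ≠ v := fun he => dag_irrefl h u (he ▸ huv)
  have hsub2 : ∀ x y, TransGen (revRel E u v) x y →
      TransGen E'' x y ∨ (ReflTransGen E'' x v ∧ ReflTransGen E'' u y) := by
    intro x y hxy
    induction hxy with
    | single hr =>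
      rcases hr with h1 | ⟨rfl, rfl⟩
      · exact Or.inl (TransGen.single h1)
      · exact Or.inr ⟨ReflTransGen.refl, ReflTransGen.refl⟩
    | tail hab hbc ih =>
      rcases hbc with h1 | ⟨rfl, rfl⟩
      · rcases ih with h2 | ⟨h2, h3⟩
        · exact Or.inl (h2.tail h1)
        · exact Or.inr ⟨h2, h3.tail h1⟩
      · rcases ih with h2 | ⟨h2, h3⟩
        · exact Or.inr ⟨h2.to_reflTransGen, ReflTransGen.refl⟩
        · exact Or.inr ⟨h2, ReflTransGen.refl⟩
  intro a ha
  rcases hsub2 a a ha with h1 | ⟨h1, h2⟩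
  · exact h a (TransGen.mono (r := E'') (p := E) (fun _ _ => hmono) _ _ h1)
  · have : ReflTransGen E'' u v := h2.trans h1
    rcases Relation.reflTransGen_iff_eq_or_transGen.mp this with he | ht
    · exact huvne he.symm
    · exact hsub1 ht

lemma revRel_adj (huv : E u v) : ∀ x y, Adj (revRel E u v) x y ↔ Adj E x y := by
  intro x y
  constructor
  · rintro (((h1 | ⟨rfl, rfl⟩)) | (h1 | ⟨rfl, rfl⟩))
    · exact Or.inl h1.1
    · exact Or.inr huv
    · exact Or.inr h1.1
    · exact Or.inl huv
  · rintro (h1 | h1)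
    · by_cases hc : x = u ∧ y = v
      · exact Or.inr (Or.inr ⟨hc.2, hc.1⟩)
      · exact Or.inl (Or.inl ⟨h1, hc⟩)
    · by_cases hc : y = u ∧ x = v
      · exact Or.inl (Or.inr ⟨hc.2, hc.1⟩)
      · exact Or.inr (Or.inl ⟨h1, hc⟩)

lemma revRel_vstruct (h : IsDAG E) (huv : E u v) (hcov : Covered E u v) :
    ∀ a m b, VStruct (revRel E u v) a m b ↔ VStruct E a m b := by
  have huvne : u ≠ v := fun he => dag_irrefl h u (he ▸ huv)
  intro a m b
  constructor
  · rintro ⟨ham, hbm, hab, hnadj⟩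
    have hnadj' : ¬ Adj E a b := fun hc => hnadj ((revRel_adj huv a b).mpr hc)
    rcases ham with ham | ⟨rfl, rfl⟩
    · rcases hbm with hbm | ⟨rfl, rfl⟩
      · exact ⟨ham.1, hbm.1, hab, hnadj'⟩
      · -- m = u, b = v, a → u with (a,u) edge: a parent of u, so a adjacent to v = b
        exfalso
        rcases (hcov a).mpr (Or.inl ham.1) with hav
        exact hnadj' (Or.inl hav)
    · -- a = v, m = u
      rcases hbm with hbm | hbm
      · -- b parent of u in E (b ≠ v), so b parent of v: adjacent to a = v
        exfalso
        exact hnadj' (Or.inr ((hcov b).mpr (Or.inl hbm.1)))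
      · exact absurd hbm.1.symm hab
  · rintro ⟨ham, hbm, hab, hnadj⟩
    have h1 : ¬ (a = u ∧ m = v) := by
      rintro ⟨rfl, rfl⟩
      rcases (hcov b).mp hbm with hbu | rfl
      · exact hnadj (Or.inr hbu)
      · exact hab rfl
    have h2 : ¬ (b = u ∧ m = v) := by
      rintro ⟨rfl, rfl⟩
      rcases (hcov a).mp ham with hau | rfl
      · exact hnadj (Or.inl hau)
      · exact hab rfl
    exact ⟨Or.inl ⟨ham, h1⟩, Or.inl ⟨hbm, h2⟩,
      hab, fun hc => hnadj ((revRel_adj huv a b).mp hc)⟩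

end Rev

section Chickering
open Relation
variable {T : ℕ} {E₁ E₂ : Fin T → Fin T → Prop}

lemma exists_covered_reversed (h₁ : IsDAG E₁) (h₂ : IsDAG E₂)
    (hskel : ∀ u v, Adj E₁ u v ↔ Adj E₂ u v)
    (hvstruct : ∀ u m v, VStruct E₁ u m v ↔ VStruct E₂ u m v)
    (hne : ∃ x y, E₁ x y ∧ E₂ y x) :
    ∃ u v, E₁ u v ∧ E₂ v u ∧ Covered E₁ u v := by
  classical
  set f : Fin T → ℕ := fun x => (anc E₁ x).card with hf
  -- the set of heads of reversed edges
  set Heads : Finset (Fin T) := Finset.univ.filter (fun y => ∃ x, E₁ x y ∧ E₂ y x) with hH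
  have hHne : Heads.Nonempty := by
    obtain ⟨x, y, hxy, hyx⟩ := hne
    exact ⟨y, by simp [hH]; exact ⟨x, hxy, hyx⟩⟩
  obtain ⟨v, hvmem, hvmin⟩ := Heads.exists_min_image f hHne
  have hv : ∃ x, E₁ x v ∧ E₂ v x := by simpa [hH] using hvmem
  set Us : Finset (Fin T) := Finset.univ.filter (fun x => E₁ x v ∧ E₂ v x) with hU
  have hUne : Us.Nonempty := by
    obtain ⟨x, hx⟩ := hv
    exact ⟨x, by simp [hU]; exact hx⟩
  obtain ⟨u, humem, humax⟩ := Us.exists_max_image f hUne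
  have hu : E₁ u v ∧ E₂ v u := by simpa [hU] using humem
  obtain ⟨huv, hvu⟩ := hu
  refine ⟨u, v, huv, hvu, ?_⟩
  -- auxiliary facts
  have hmin : ∀ y ∈ Heads, f v ≤ f y := hvmin
  have hmax : ∀ x ∈ Us, f x ≤ f u := humax
  have hmem_heads : ∀ y, (∃ x, E₁ x y ∧ E₂ y x) → f v ≤ f y := by
    intro y hy
    exact hmin y (by simp [hH]; exact hy)
  have hmem_us : ∀ x, E₁ x v → E₂ v x → f x ≤ f u := by
    intro x hx1 hx2
    exact hmax x (by simp [hU]; exact ⟨hx1, hx2⟩)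
  intro w
  constructor
  · -- E₁ w v → E₁ w u ∨ w = u
    intro hwv
    by_cases hwu : w = u
    · exact Or.inr hwu
    refine Or.inl ?_
    -- w and u are adjacent in E₁
    have hadj : Adj E₁ w u := by
      by_contra hnadj
      have hvs : VStruct E₁ w v u := ⟨hwv, huv, hwu, hnadj⟩
      have := (hvstruct w v u).mp hvs
      exact dag_asymm h₂ hvu this.2.1
    rcases hadj with hadj | hadj
    · exact hadj
    · -- E₁ u w : derive a contradiction
      exfalso
      have hadj2 : Adj E₂ w v := (hskel w v).mp (Or.inl hwv)
      rcases hadj2 with h3 | h3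
      · -- E₂ w v; consider edge between u and w in E₂
        have hadj3 : Adj E₂ u w := (hskel u w).mp (Or.inl hadj)
        rcases hadj3 with h4 | h4
        · -- cycle v → u → w → v in E₂
          exact h₂ v (((TransGen.single hvu).tail h4).tail h3)
        · -- (u, w) reversed with head w, f w < f v contradicts minimality
          have h5 : f v ≤ f w := hmem_heads w ⟨u, hadj, h4⟩
          have h6 : f w < f v := anc_card_lt h₁ hwv
          omega
      · -- E₂ v w: w ∈ Us with f u < f w contradicts maximality
        have h5 : f w ≤ f u := hmem_us w hwv h3
        have h6 : f u < f w := anc_card_lt h₁ hadj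
        omega
  · -- E₁ w u ∨ w = u → E₁ w v
    rintro (hwu | rfl)
    swap
    · exact huv
    -- w parent of u; first show w, v adjacent
    have hwnev : w ≠ v := by
      rintro rfl
      exact dag_asymm h₁ huv hwu
    have hadj : Adj E₁ w v := by
      by_contra hnadj
      have hadj2 : Adj E₂ w u := (hskel w u).mp (Or.inl hwu)
      rcases hadj2 with h3 | h3
      · -- v-structure w → u ← v in E₂
        have hnadj2 : ¬ Adj E₂ w v := fun hc => hnadj ((hskel w v).mpr hc)
        have hvs : VStruct E₂ w u v := ⟨h3, hvu, hwnev, hnadj2⟩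
        have := (hvstruct w u v).mpr hvs
        exact dag_asymm h₁ huv this.2.1
      · -- (w, u) reversed with head u, f u < f v contradicts minimality
        have h5 : f v ≤ f u := hmem_heads u ⟨w, hwu, h3⟩
        have h6 : f u < f v := anc_card_lt h₁ huv
        omega
    rcases hadj with hadj | hadj
    · exact hadj
    · -- E₁ v w: cycle v → w → u → v
      exact absurd (((TransGen.single hadj).tail hwu).tail huv) (h₁ v)

end Chickering

section Algebra
variable {T : ℕ}

lemma key_scalar (du dv c ri rj si sj : ℝ) (hdu : 0 < du) (hdv : 0 < dv) :
    (du)⁻¹ * (ri * rj) + (dv)⁻¹ * (si * sj) =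
      (du*dv/(c^2*du+dv))⁻¹ *
        (((1 - c*(c*du/(c^2*du+dv)))*ri - (c*du/(c^2*du+dv))*si) *
         ((1 - c*(c*du/(c^2*du+dv)))*rj - (c*du/(c^2*du+dv))*sj)) +
      (c^2*du+dv)⁻¹ * ((si + c*ri) * (sj + c*rj)) := by
  have h1 : (0:ℝ) < c^2*du+dv := by positivity
  field_simp
  ring

lemma covSet_subset_reversal {E : Fin T → Fin T → Prop} (hdag : IsDAG E)
    {u v : Fin T} (huv : E u v) (hcov : Covered E u v) :
    covSet T E ⊆ covSet T (revRel E u v) := by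
  classical
  rintro S ⟨B, d, hsupp, hd, rfl⟩
  have huvne : u ≠ v := fun he => dag_irrefl hdag u (he ▸ huv)
  have hBuv : B u v = 0 := by
    by_contra hne; exact dag_asymm hdag huv (hsupp u v hne)
  have hBuu : B u u = 0 := by
    by_contra hne; exact dag_irrefl hdag u (hsupp u u hne)
  have hBvv : B v v = 0 := by
    by_contra hne; exact dag_irrefl hdag v (hsupp v v hne)
  set c := B v u with hc
  set du := d u with hdu0
  set dv := d v with hdv0
  have hdu : 0 < du := hd u
  have hdv : 0 < dv := hd v
  have hdvpos : (0:ℝ) < c^2*du + dv := by positivity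
  set dv2 := c^2*du + dv with hdv2
  set c' := c*du/dv2 with hc'
  set du2 := du*dv/dv2 with hdu2
  have hdu2pos : 0 < du2 := by rw [hdu2]; positivity
  set B' : Matrix (Fin T) (Fin T) ℝ := fun t i =>
    if t = u then (if i = v then c' else if i = u then 0
      else B u i - c' * (B v i + c * B u i))
    else if t = v then (if i = u then 0 else B v i + c * B u i)
    else B t i with hB'
  set d' : Fin T → ℝ := fun t => if t = u then du2 else if t = v then dv2 else d t with hd'0
  have hd' : ∀ t, 0 < d' t := by
    intro t
    simp only [hd'0]
    split
    · exact hdu2pos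
    · split
      · exact hdvpos
      · exact hd t
  have hsupp' : ∀ t i, B' t i ≠ 0 → revRel E u v i t := by
    intro t i hne
    simp only [hB'] at hne
    by_cases ht : t = u
    · rw [if_pos ht] at hne
      rw [ht]
      by_cases hiv : i = v
      · exact Or.inr ⟨hiv, rfl⟩
      · rw [if_neg hiv] at hne
        by_cases hiu : i = u
        · rw [if_pos hiu] at hne; exact absurd rfl hne
        · rw [if_neg hiu] at hne
          have hor : B u i ≠ 0 ∨ B v i ≠ 0 := by
            by_contra hcon
            push_neg at hcon
            rw [hcon.1, hcon.2] at hne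
            simp at hne
          have hEiu : E i u := by
            rcases hor with h1 | h1
            · exact hsupp u i h1
            · exact ((hcov i).mp (hsupp v i h1)).resolve_right hiu
          exact Or.inl ⟨hEiu, fun hcon => hiu hcon.1⟩
    · rw [if_neg ht] at hne
      by_cases htv : t = v
      · rw [if_pos htv] at hne
        rw [htv]
        by_cases hiu : i = u
        · rw [if_pos hiu] at hne; exact absurd rfl hne
        · rw [if_neg hiu] at hne
          have hor : B v i ≠ 0 ∨ B u i ≠ 0 := by
            by_contra hcon
            push_neg at hcon
            rw [hcon.1, hcon.2] at hne
            simp at hne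
          have hEiv : E i v := by
            rcases hor with h1 | h1
            · exact hsupp v i h1
            · exact (hcov i).mpr (Or.inl (hsupp u i h1))
          exact Or.inl ⟨hEiv, fun hcon => hiu hcon.1⟩
      · rw [if_neg htv] at hne
        exact Or.inl ⟨hsupp t i hne, fun hcon => htv hcon.2⟩
  have hdag' : IsDAG (revRel E u v) := revRel_isDAG hdag huv hcov
  have hdet : IsUnit (1 - B).det := isUnit_one_sub_det hdag hsupp
  have hdet' : IsUnit (1 - B').det := isUnit_one_sub_det hdag' hsupp'
  -- pointwise row formulas
  have hs' : ∀ k, ((1 - B') : Matrix (Fin T) (Fin T) ℝ) v k =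
      ((1 - B) : Matrix (Fin T) (Fin T) ℝ) v k + c * ((1 - B) : Matrix (Fin T) (Fin T) ℝ) u k := by
    intro k
    simp only [Matrix.sub_apply, Matrix.one_apply]
    simp only [hB', if_neg huvne.symm, if_pos rfl]
    by_cases hk : k = u
    · subst hk
      rw [if_pos rfl]
      simp [huvne.symm, ← hc, hBuu]
    · rw [if_neg hk]
      have : ¬ (u = k) := fun hcon => hk hcon.symm
      simp [this]
      ring
  have hr' : ∀ k, ((1 - B') : Matrix (Fin T) (Fin T) ℝ) u k =
      (1 - c*c') * ((1 - B) : Matrix (Fin T) (Fin T) ℝ) u k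
        - c' * ((1 - B) : Matrix (Fin T) (Fin T) ℝ) v k := by
    intro k
    simp only [Matrix.sub_apply, Matrix.one_apply]
    simp only [hB', if_pos rfl]
    by_cases hkv : k = v
    · subst hkv
      rw [if_pos rfl]
      simp [huvne, hBuv, hBvv]
    · rw [if_neg hkv]
      by_cases hku : k = u
      · subst hku
        rw [if_pos rfl]
        simp [huvne.symm, ← hc, hBuu]
        ring
      · rw [if_neg hku]
        have h1 : ¬ (u = k) := fun hcon => hku hcon.symm
        have h2 : ¬ (v = k) := fun hcon => hkv hcon.symm
        simp [h1, h2]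
        ring
  -- precision matrices agree
  have hA : (1 - B)ᵀ * Matrix.diagonal (fun t => (d t)⁻¹) * (1 - B) =
      (1 - B')ᵀ * Matrix.diagonal (fun t => (d' t)⁻¹) * (1 - B') := by
    ext i j
    rw [prec_apply, prec_apply]
    have hvmem : v ∈ Finset.univ.erase u :=
      Finset.mem_erase.mpr ⟨huvne.symm, Finset.mem_univ v⟩
    rw [← Finset.add_sum_erase _ _ (Finset.mem_univ u),
        ← Finset.add_sum_erase _ _ hvmem,
        ← Finset.add_sum_erase _
          (fun t => (d' t)⁻¹ * ((1 - B') t i * (1 - B') t j)) (Finset.mem_univ u),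
        ← Finset.add_sum_erase _
          (fun t => (d' t)⁻¹ * ((1 - B') t i * (1 - B') t j)) hvmem]
    have hrest : ∑ t ∈ (Finset.univ.erase u).erase v,
        (d t)⁻¹ * ((1 - B) t i * (1 - B) t j) =
        ∑ t ∈ (Finset.univ.erase u).erase v,
        (d' t)⁻¹ * ((1 - B') t i * (1 - B') t j) := by
      apply Finset.sum_congr rfl
      intro t ht
      obtain ⟨htv, htu, -⟩ : t ≠ v ∧ t ≠ u ∧ True := by
        rcases Finset.mem_erase.mp ht with ⟨h1, h2⟩
        rcases Finset.mem_erase.mp h2 with ⟨h3, -⟩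
        exact ⟨h1, h3, trivial⟩
      have hB'eq : ∀ k, B' t k = B t k := by
        intro k
        simp only [hB', if_neg htu, if_neg htv]
      have hd'eq : d' t = d t := by
        simp only [hd'0, if_neg htu, if_neg htv]
      simp only [Matrix.sub_apply, hB'eq, hd'eq]
    have hkey : (d u)⁻¹ * ((1 - B) u i * (1 - B) u j) +
        (d v)⁻¹ * ((1 - B) v i * (1 - B) v j) =
        (d' u)⁻¹ * ((1 - B') u i * (1 - B') u j) +
        (d' v)⁻¹ * ((1 - B') v i * (1 - B') v j) := by
      rw [hr' i, hr' j, hs' i, hs' j]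
      have hdu' : d' u = du2 := by simp [hd'0]
      have hdv' : d' v = dv2 := by simp [hd'0, huvne.symm]
      rw [hdu', hdv', ← hdu0, ← hdv0]
      rw [hdu2, hc', hdv2]
      exact key_scalar du dv c _ _ _ _ hdu hdv
    linarith [hrest, hkey]
  -- conclude
  refine ⟨B', d', hsupp', hd', ?_⟩
  rw [cov_eq_prec_inv hdet (fun t => (hd t).ne'),
      cov_eq_prec_inv hdet' (fun t => (hd' t).ne'), hA]

end Algebra

section Main
variable {T : ℕ}

lemma covSet_congr {E₁ E₂ : Fin T → Fin T → Prop} (h : ∀ x y, E₁ x y ↔ E₂ x y) :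
    covSet T E₁ = covSet T E₂ := by
  ext S
  constructor <;> rintro ⟨B, d, hs, hd, rfl⟩
  · exact ⟨B, d, fun t v hne => (h v t).mp (hs t v hne), hd, rfl⟩
  · exact ⟨B, d, fun t v hne => (h v t).mpr (hs t v hne), hd, rfl⟩

lemma covSet_eq_reversal {E : Fin T → Fin T → Prop} (hdag : IsDAG E)
    {u v : Fin T} (huv : E u v) (hcov : Covered E u v) :
    covSet T E = covSet T (revRel E u v) := by
  apply le_antisymm
  · exact covSet_subset_reversal hdag huv hcov
  · have huvne : u ≠ v := fun he => dag_irrefl hdag u (he ▸ huv)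
    have hdag' : IsDAG (revRel E u v) := revRel_isDAG hdag huv hcov
    have hvu' : revRel E u v v u := Or.inr ⟨rfl, rfl⟩
    have hcov' : Covered (revRel E u v) v u := by
      intro w
      constructor
      · rintro (⟨hwu, hne⟩ | ⟨h5, -⟩)
        · -- E w u (and automatically w ≠ u by irreflexivity)
          have hwne : w ≠ u := fun he => dag_irrefl hdag u (he ▸ hwu)
          exact Or.inl (Or.inl ⟨(hcov w).mpr (Or.inl hwu), fun hcon => hwne hcon.1⟩)
        · exact Or.inr h5
      · rintro ((⟨hwv, hne⟩ | ⟨-, h6⟩) | h7)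
        · rcases (hcov w).mp hwv with hwu | rfl
          · exact Or.inl ⟨hwu, fun hcon => huvne hcon.2⟩
          · exact (hne ⟨rfl, rfl⟩).elim
        · exact absurd h6.symm huvne
        · exact Or.inr ⟨h7, rfl⟩
    have hsub := covSet_subset_reversal hdag' hvu' hcov'
    have heq : ∀ x y, revRel (revRel E u v) v u x y ↔ E x y := by
      intro x y
      constructor
      · rintro ((⟨(⟨h1, -⟩ | ⟨rfl, rfl⟩), h2⟩) | ⟨rfl, rfl⟩)
        · exact h1
        · exact absurd ⟨rfl, rfl⟩ h2
        · exact huv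
      · intro h1
        by_cases hc : x = u ∧ y = v
        · exact Or.inr hc
        · refine Or.inl ⟨Or.inl ⟨h1, hc⟩, fun hcon => ?_⟩
          have h2 := h1
          rw [hcon.1, hcon.2] at h2
          exact dag_asymm hdag huv h2
    calc covSet T (revRel E u v) ⊆ covSet T (revRel (revRel E u v) v u) := hsub
      _ = covSet T E := covSet_congr heq

open Classical in
lemma main_aux : ∀ (n : ℕ) (E₁ E₂ : Fin T → Fin T → Prop), IsDAG E₁ → IsDAG E₂ →
    (∀ u v, Adj E₁ u v ↔ Adj E₂ u v) →
    (∀ u m v, VStruct E₁ u m v ↔ VStruct E₂ u m v) →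
    (Finset.univ.filter (fun p : Fin T × Fin T => E₁ p.1 p.2 ∧ E₂ p.2 p.1)).card = n →
    covSet T E₁ = covSet T E₂ := by
  intro n
  induction n with
  | zero =>
    intro E₁ E₂ h₁ h₂ hskel hvstruct hcard
    apply covSet_congr
    have hempty : ∀ x y, ¬ (E₁ x y ∧ E₂ y x) := by
      intro x y hc
      have : (x, y) ∈ Finset.univ.filter
          (fun p : Fin T × Fin T => E₁ p.1 p.2 ∧ E₂ p.2 p.1) := by
        simp only [Finset.mem_filter, Finset.mem_univ, true_and]
        exact hc
      rw [Finset.card_eq_zero.mp hcard] at this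
      exact absurd this (Finset.notMem_empty _)
    intro x y
    constructor
    · intro h
      rcases (hskel x y).mp (Or.inl h) with h' | h'
      · exact h'
      · exact absurd ⟨h, h'⟩ (hempty x y)
    · intro h
      rcases (hskel x y).mpr (Or.inl h) with h' | h'
      · exact h'
      · exact absurd ⟨h', h⟩ (hempty y x)
  | succ n ih =>
    intro E₁ E₂ h₁ h₂ hskel hvstruct hcard
    have hne : ∃ x y, E₁ x y ∧ E₂ y x := by
      have : (Finset.univ.filter
          (fun p : Fin T × Fin T => E₁ p.1 p.2 ∧ E₂ p.2 p.1)).Nonempty := by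
        rw [← Finset.card_pos, hcard]; omega
      obtain ⟨p, hp⟩ := this
      simp only [Finset.mem_filter, Finset.mem_univ, true_and] at hp
      exact ⟨p.1, p.2, hp⟩
    obtain ⟨u, v, huv, hvu, hcov⟩ :=
      exists_covered_reversed h₁ h₂ hskel hvstruct hne
    have huvne : u ≠ v := fun he => dag_irrefl h₁ u (he ▸ huv)
    set E₁' := revRel E₁ u v with hE₁'
    have hdag' : IsDAG E₁' := revRel_isDAG h₁ huv hcov
    have hskel' : ∀ x y, Adj E₁' x y ↔ Adj E₂ x y :=
      fun x y => (revRel_adj huv x y).trans (hskel x y)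
    have hvstruct' : ∀ a m b, VStruct E₁' a m b ↔ VStruct E₂ a m b :=
      fun a m b => (revRel_vstruct h₁ huv hcov a m b).trans (hvstruct a m b)
    have hcard' : (Finset.univ.filter
        (fun p : Fin T × Fin T => E₁' p.1 p.2 ∧ E₂ p.2 p.1)).card = n := by
      have hseteq : Finset.univ.filter
          (fun p : Fin T × Fin T => E₁' p.1 p.2 ∧ E₂ p.2 p.1) =
          (Finset.univ.filter
            (fun p : Fin T × Fin T => E₁ p.1 p.2 ∧ E₂ p.2 p.1)).erase (u, v) := by
        ext ⟨x, y⟩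
        simp only [Finset.mem_filter, Finset.mem_univ, true_and, Finset.mem_erase]
        constructor
        · rintro ⟨hE, hrev⟩
          rcases hE with ⟨h3, h4⟩ | ⟨rfl, rfl⟩
          · exact ⟨fun hcon => h4 ⟨congrArg Prod.fst hcon, congrArg Prod.snd hcon⟩,
              h3, hrev⟩
          · exact absurd hrev (dag_asymm h₂ hvu)
        · rintro ⟨hne', h3, h4⟩
          refine ⟨Or.inl ⟨h3, fun hcon => hne' ?_⟩, h4⟩
          rw [hcon.1, hcon.2]
      have hm : (u, v) ∈ Finset.univ.filter
          (fun p : Fin T × Fin T => E₁ p.1 p.2 ∧ E₂ p.2 p.1) := by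
        simp only [Finset.mem_filter, Finset.mem_univ, true_and]
        exact ⟨huv, hvu⟩
      rw [hseteq, Finset.card_erase_of_mem hm, hcard]
      omega
    calc covSet T E₁ = covSet T E₁' := covSet_eq_reversal h₁ huv hcov
      _ = covSet T E₂ := ih E₁' E₂ hdag' h₂ hskel' hvstruct' hcard'

end Main


/-- Gaussian distribution equivalence of Markov-equivalent DAGs (forward direction of
Result 3 for the Gaussian family): if two DAGs on `Fin T` have the same skeleton and the
same set of v-structures, then they realize the same set of covariance matrices. -/
theorem stmt_15 (T : ℕ) (E₁ E₂ : Fin T → Fin T → Prop)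
    (h₁ : IsDAG E₁) (h₂ : IsDAG E₂)
    (hskel : ∀ u v, Adj E₁ u v ↔ Adj E₂ u v)
    (hvstruct : ∀ u m v, VStruct E₁ u m v ↔ VStruct E₂ u m v) :
    covSet T E₁ = covSet T E₂ := by
  classical
  exact main_aux _ E₁ E₂ h₁ h₂ hskel hvstruct rfl
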